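/- Let n ≥ 1 and let A, B ∈ O(n) = Matrix.orthogonalGroup (Fin n) ℝ. Then A and B are joined by a continuous path inside O(n) if and only if det A = det B. Consequently, O(n) has exactly two path components, distinguished by the determinant, which takes only the values 1 and −1 on O(n). -/

import Mathlib

/-!
The determinant is continuous on `O(n)` with values in `{1, -1}`, hence constant along paths.
Conversely, let `A ∈ O(n + 2)` have determinant `1` and let `e` be the last basis vector. A rotation
in the plane of `e` and `A e`, which is joined to `1` through the rotations by smaller angles,
carries `e` to `A e`; undoing it moves `A` along a path to a matrix fixing `e`, i.e. to a block
matrix `C ⊕ 1` with `C ∈ SO(n + 1)`, and induction on `n` joins `A` to `1`. Finally, if `det A = det B`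
then `A B⁻¹ ∈ SO(n)`, and right translation by `B` carries a path from `A B⁻¹` to `1` to one from
`A` to `B`.
-/

open Matrix

namespace Matrix

variable {ι : Type*} [Fintype ι] [DecidableEq ι]

theorem det_eq_one_or_eq_neg_one_of_mem_orthogonalGroup {A : Matrix ι ι ℝ}
    (hA : A ∈ orthogonalGroup ι ℝ) : A.det = 1 ∨ A.det = -1 := by
  have h := congrArg det ((mem_orthogonalGroup_iff' ι ℝ).mp hA)
  rw [det_mul, det_transpose, det_one] at h
  exact mul_self_eq_one_iff.mp h

theorem det_eq_of_joined {A B : orthogonalGroup ι ℝ} (h : Joined A B) :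
    (A : Matrix ι ι ℝ).det = (B : Matrix ι ι ℝ).det := by
  obtain ⟨γ⟩ := h
  set dets := Set.range fun t => (γ t : Matrix ι ι ℝ).det
  have hconn : IsPreconnected dets := isPreconnected_range (by fun_prop)
  have hA : (A : Matrix ι ι ℝ).det ∈ dets := ⟨0, by simp⟩
  have hB : (B : Matrix ι ι ℝ).det ∈ dets := ⟨1, by simp⟩
  have h0 : (0 : ℝ) ∉ dets := by
    rintro ⟨t, ht⟩
    rcases det_eq_one_or_eq_neg_one_of_mem_orthogonalGroup (γ t).2 with h | h <;>
      simp [ht] at h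
  rcases det_eq_one_or_eq_neg_one_of_mem_orthogonalGroup A.2 with hA1 | hA1 <;>
  rcases det_eq_one_or_eq_neg_one_of_mem_orthogonalGroup B.2 with hB1 | hB1
  · rw [hA1, hB1]
  · exact absurd (hconn.Icc_subset (hB1 ▸ hB) (hA1 ▸ hA) (by norm_num)) h0
  · exact absurd (hconn.Icc_subset (hA1 ▸ hA) (hB1 ▸ hB) (by norm_num)) h0
  · rw [hA1, hB1]

section PlaneRotation

variable {κ : Type*} [DecidableEq κ]

/-- For orthonormal `u`, `w` this is the rotation by `θ` in the plane spanned by `u` and `w`. -/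
noncomputable def planeRotation (u w : κ → ℝ) (θ : ℝ) : Matrix κ κ ℝ :=
  1 + (Real.cos θ - 1) • (vecMulVec u u + vecMulVec w w) +
    Real.sin θ • (vecMulVec w u - vecMulVec u w)

@[simp]
theorem planeRotation_zero (u w : κ → ℝ) : planeRotation u w 0 = 1 := by
  simp [planeRotation]

theorem transpose_planeRotation (u w : κ → ℝ) (θ : ℝ) :
    (planeRotation u w θ)ᵀ = planeRotation u w (-θ) := by
  simp only [planeRotation, transpose_add, transpose_sub, transpose_smul, transpose_one,
    transpose_vecMulVec, Real.cos_neg, Real.sin_neg]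
  module

@[fun_prop]
theorem continuous_planeRotation (u w : κ → ℝ) : Continuous (planeRotation u w) := by
  unfold planeRotation
  fun_prop

variable [Fintype κ] {u w : κ → ℝ}

theorem planeRotation_mulVec_left (huu : u ⬝ᵥ u = 1) (huw : u ⬝ᵥ w = 0) (θ : ℝ) :
    planeRotation u w θ *ᵥ u = Real.cos θ • u + Real.sin θ • w := by
  have hwu : w ⬝ᵥ u = 0 := by rwa [dotProduct_comm]
  simp only [planeRotation, add_mulVec, sub_mulVec, smul_mulVec, one_mulVec, vecMulVec_mulVec,
    op_smul_eq_smul, huu, hwu, one_smul, zero_smul]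
  module

theorem planeRotation_mul_planeRotation (huu : u ⬝ᵥ u = 1) (hww : w ⬝ᵥ w = 1)
    (huw : u ⬝ᵥ w = 0) (θ φ : ℝ) :
    planeRotation u w θ * planeRotation u w φ = planeRotation u w (θ + φ) := by
  have hwu : w ⬝ᵥ u = 0 := by rwa [dotProduct_comm]
  simp only [planeRotation, mul_add, add_mul, mul_sub, sub_mul, mul_one, one_mul, smul_mul_assoc,
    mul_smul_comm, vecMulVec_mul_vecMulVec, huu, hww, huw, hwu, one_smul,
    zero_smul, vecMulVec_zero, smul_add, smul_sub, smul_smul, Real.cos_add, Real.sin_add]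
  module

theorem planeRotation_mem_orthogonalGroup (huu : u ⬝ᵥ u = 1) (hww : w ⬝ᵥ w = 1)
    (huw : u ⬝ᵥ w = 0) (θ : ℝ) : planeRotation u w θ ∈ orthogonalGroup κ ℝ := by
  rw [mem_orthogonalGroup_iff', transpose_planeRotation,
    planeRotation_mul_planeRotation huu hww huw, neg_add_cancel, planeRotation_zero]

theorem joined_one_planeRotation (huu : u ⬝ᵥ u = 1) (hww : w ⬝ᵥ w = 1) (huw : u ⬝ᵥ w = 0)
    (θ : ℝ) : Joined 1 (⟨planeRotation u w θ, planeRotation_mem_orthogonalGroup huu hww huw θ⟩ :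
      orthogonalGroup κ ℝ) := by
  have hrot : Continuous fun φ : ℝ =>
      (⟨planeRotation u w φ, planeRotation_mem_orthogonalGroup huu hww huw φ⟩ :
        orthogonalGroup κ ℝ) := by fun_prop
  convert (PathConnectedSpace.joined 0 θ).map hrot
  exact (planeRotation_zero u w).symm

end PlaneRotation

section Transitivity

variable {κ : Type*} [Fintype κ]

theorem exists_unit_orthogonal_smul_eq {e f r : κ → ℝ} (hff : f ⬝ᵥ f = 1) (hef : e ⬝ᵥ f = 0)
    (her : e ⬝ᵥ r = 0) : ∃ w, w ⬝ᵥ w = 1 ∧ e ⬝ᵥ w = 0 ∧ r = √(r ⬝ᵥ r) • w := by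
  rcases eq_or_ne r 0 with rfl | hr
  · exact ⟨f, hff, hef, by simp⟩
  have hpos : 0 < r ⬝ᵥ r := by simpa using dotProduct_self_star_pos_iff.mpr hr
  have hs : √(r ⬝ᵥ r) ≠ 0 := (Real.sqrt_pos.mpr hpos).ne'
  refine ⟨(√(r ⬝ᵥ r))⁻¹ • r, ?_, ?_, ?_⟩
  · rw [smul_dotProduct, dotProduct_smul, smul_eq_mul, smul_eq_mul, ← mul_assoc, ← mul_inv,
      Real.mul_self_sqrt hpos.le, inv_mul_cancel₀ hpos.ne']
  · rw [dotProduct_smul, her, smul_zero]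
  · rw [smul_smul, mul_inv_cancel₀ hs, one_smul]

theorem exists_joined_one_mulVec_eq [DecidableEq κ] {e f a : κ → ℝ} (hee : e ⬝ᵥ e = 1)
    (hff : f ⬝ᵥ f = 1) (hef : e ⬝ᵥ f = 0) (haa : a ⬝ᵥ a = 1) :
    ∃ S : orthogonalGroup κ ℝ, Joined 1 S ∧ (S : Matrix κ κ ℝ) *ᵥ e = a := by
  set c := e ⬝ᵥ a
  set r := a - c • e
  have her : e ⬝ᵥ r = 0 := by
    rw [dotProduct_sub, dotProduct_smul, hee, smul_eq_mul, mul_one, sub_self]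
  have hrr : r ⬝ᵥ r = 1 - c ^ 2 := by
    simp only [r, sub_dotProduct, dotProduct_sub, smul_dotProduct, dotProduct_smul, hee, haa,
      dotProduct_comm a e, smul_eq_mul]
    ring
  obtain ⟨w, hww, hew, hrw⟩ := exists_unit_orthogonal_smul_eq hff hef her
  have hc : c ^ 2 ≤ 1 := by
    have : 0 ≤ r ⬝ᵥ r := by simpa using dotProduct_self_star_nonneg r
    linarith
  refine ⟨_, joined_one_planeRotation hee hww hew (Real.arccos c), ?_⟩
  rw [planeRotation_mulVec_left hee hew, Real.cos_arccos (by nlinarith) (by nlinarith),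
    Real.sin_arccos, ← hrr, ← hrw, add_sub_cancel]

end Transitivity

section BlockDiagOne

variable {R : Type*} [CommRing R] {n : ℕ}

/-- The block diagonal matrix `C ⊕ 1`, the new index being `Fin.last n`. -/
def blockDiagOne (C : Matrix (Fin n) (Fin n) R) : Matrix (Fin (n + 1)) (Fin (n + 1)) R :=
  reindex finSumFinEquiv finSumFinEquiv (fromBlocks C 0 0 1)

@[simp]
theorem blockDiagOne_one : blockDiagOne (1 : Matrix (Fin n) (Fin n) R) = 1 := by
  simp [blockDiagOne, fromBlocks_one]

theorem blockDiagOne_mul (C D : Matrix (Fin n) (Fin n) R) :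
    blockDiagOne C * blockDiagOne D = blockDiagOne (C * D) := by
  simp [blockDiagOne, reindex_apply, submatrix_mul_equiv, fromBlocks_multiply]

theorem transpose_blockDiagOne (C : Matrix (Fin n) (Fin n) R) :
    (blockDiagOne C)ᵀ = blockDiagOne Cᵀ := by
  simp [blockDiagOne, fromBlocks_transpose]

theorem blockDiagOne_injective : Function.Injective (blockDiagOne (R := R) (n := n)) := by
  intro C D h
  exact (fromBlocks_inj.mp ((reindex _ _).injective h)).1

@[simp]
theorem det_blockDiagOne (C : Matrix (Fin n) (Fin n) R) : (blockDiagOne C).det = C.det := by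
  simp [blockDiagOne]

theorem continuous_blockDiagOne [TopologicalSpace R] :
    Continuous (blockDiagOne (R := R) (n := n)) :=
  (continuous_id.matrix_fromBlocks continuous_const continuous_const
    continuous_const).matrix_reindex _ _

theorem blockDiagOne_mem_orthogonalGroup_iff {C : Matrix (Fin n) (Fin n) R} :
    blockDiagOne C ∈ orthogonalGroup (Fin (n + 1)) R ↔ C ∈ orthogonalGroup (Fin n) R := by
  rw [mem_orthogonalGroup_iff', mem_orthogonalGroup_iff', transpose_blockDiagOne,
    blockDiagOne_mul, ← blockDiagOne_one, blockDiagOne_injective.eq_iff]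

theorem eq_blockDiagOne_of_mulVec_single_last {B : Matrix (Fin (n + 1)) (Fin (n + 1)) R}
    (hB : B ∈ orthogonalGroup (Fin (n + 1)) R)
    (hBe : B *ᵥ Pi.single (Fin.last n) 1 = Pi.single (Fin.last n) 1) :
    B = blockDiagOne (B.submatrix Fin.castSucc Fin.castSucc) := by
  set e : Fin (n + 1) → R := Pi.single (Fin.last n) 1
  have hBe' : e ᵥ* B = e := by
    rw [← mulVec_transpose, ← hBe, mulVec_mulVec, (mem_orthogonalGroup_iff' _ R).mp hB,
      one_mulVec, hBe]
  rw [mulVec_single_one] at hBe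
  rw [single_one_vecMul] at hBe'
  ext i j
  induction i using Fin.lastCases with
  | last => induction j using Fin.lastCases with
    | last => simpa [blockDiagOne, e] using congrFun hBe (Fin.last n)
    | cast j => simpa [blockDiagOne, e] using congrFun hBe' j.castSucc
  | cast i => induction j using Fin.lastCases with
    | last => simpa [blockDiagOne, e] using congrFun hBe i.castSucc
    | cast j => simp [blockDiagOne]

end BlockDiagOne

theorem dotProduct_mulVec_mulVec_of_mem_orthogonalGroup {κ R : Type*} [Fintype κ] [DecidableEq κ]
    [CommRing R] {A : Matrix κ κ R} (hA : A ∈ orthogonalGroup κ R) (x y : κ → R) :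
    (A *ᵥ x) ⬝ᵥ (A *ᵥ y) = x ⬝ᵥ y := by
  rw [dotProduct_mulVec, ← mulVec_transpose, mulVec_mulVec, (mem_orthogonalGroup_iff' κ R).mp hA,
    one_mulVec]

theorem joined_one_blockDiagOne {n : ℕ} {C : Matrix (Fin n) (Fin n) ℝ}
    (hC : C ∈ orthogonalGroup (Fin n) ℝ) (h : Joined (⟨C, hC⟩ : orthogonalGroup (Fin n) ℝ) 1) :
    Joined (⟨blockDiagOne C, blockDiagOne_mem_orthogonalGroup_iff.mpr hC⟩ :
      orthogonalGroup (Fin (n + 1)) ℝ) 1 := by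
  have hcont : Continuous fun D : orthogonalGroup (Fin n) ℝ =>
      (⟨blockDiagOne D, blockDiagOne_mem_orthogonalGroup_iff.mpr D.2⟩ :
        orthogonalGroup (Fin (n + 1)) ℝ) :=
    (continuous_blockDiagOne.comp continuous_subtype_val).subtype_mk _
  convert h.map hcont
  exact blockDiagOne_one.symm

theorem joined_one_of_mulVec_single_last {n : ℕ}
    (ih : ∀ C : orthogonalGroup (Fin n) ℝ, (C : Matrix (Fin n) (Fin n) ℝ).det = 1 → Joined C 1)
    (B : orthogonalGroup (Fin (n + 1)) ℝ)
    (hdet : (B : Matrix (Fin (n + 1)) (Fin (n + 1)) ℝ).det = 1)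
    (hBe : (B : Matrix (Fin (n + 1)) (Fin (n + 1)) ℝ) *ᵥ Pi.single (Fin.last n) 1 =
      Pi.single (Fin.last n) 1) :
    Joined B 1 := by
  have hB := eq_blockDiagOne_of_mulVec_single_last B.2 hBe
  set C := (B : Matrix (Fin (n + 1)) (Fin (n + 1)) ℝ).submatrix Fin.castSucc Fin.castSucc
  have hC : C ∈ orthogonalGroup (Fin n) ℝ := blockDiagOne_mem_orthogonalGroup_iff.mp (hB ▸ B.2)
  have hCdet : C.det = 1 := by rw [← det_blockDiagOne, ← hB, hdet]
  convert joined_one_blockDiagOne hC (ih ⟨C, hC⟩ hCdet)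

theorem joined_one_of_det_eq_one : ∀ {n : ℕ} (A : orthogonalGroup (Fin n) ℝ),
    (A : Matrix (Fin n) (Fin n) ℝ).det = 1 → Joined A 1
  | 0, A, _ => by rw [Subsingleton.elim A 1]
  | 1, A, hA => by
    have : A = 1 := by
      ext i j
      fin_cases i; fin_cases j
      simpa [det_fin_one] using hA
    rw [this]
  | n + 2, A, hA => by
    set e : Fin (n + 2) → ℝ := Pi.single (Fin.last (n + 1)) 1
    have hee : e ⬝ᵥ e = 1 := by simp [e]
    obtain ⟨S, hS, hSe⟩ := exists_joined_one_mulVec_eq (f := Pi.single 0 1) hee (by simp)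
      (by simp [e]) ((dotProduct_mulVec_mulVec_of_mem_orthogonalGroup A.2 e e).trans hee)
    have hAB : Joined A (S⁻¹ * A) := by simpa using hS.inv.mul (Joined.refl A)
    have hBe : ((S⁻¹ * A : orthogonalGroup (Fin (n + 2)) ℝ) :
        Matrix (Fin (n + 2)) (Fin (n + 2)) ℝ) *ᵥ e = e := by
      rw [Submonoid.coe_mul, ← mulVec_mulVec, ← hSe, mulVec_mulVec, ← Submonoid.coe_mul,
        inv_mul_cancel, OneMemClass.coe_one, one_mulVec]
    exact hAB.trans (joined_one_of_mulVec_single_last joined_one_of_det_eq_one _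
      ((det_eq_of_joined hAB).symm.trans hA) hBe)

theorem joined_iff_det_eq {n : ℕ} (A B : orthogonalGroup (Fin n) ℝ) :
    Joined A B ↔ (A : Matrix (Fin n) (Fin n) ℝ).det = (B : Matrix (Fin n) (Fin n) ℝ).det := by
  refine ⟨det_eq_of_joined, fun h => ?_⟩
  have hB : (B : Matrix (Fin n) (Fin n) ℝ).det ≠ 0 := by
    rcases det_eq_one_or_eq_neg_one_of_mem_orthogonalGroup B.2 with h1 | h1 <;> norm_num [h1]
  have hAB : ((A * B⁻¹ : orthogonalGroup (Fin n) ℝ) : Matrix (Fin n) (Fin n) ℝ).det = 1 := by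
    refine (mul_eq_right₀ hB).mp ?_
    rw [← det_mul, ← Submonoid.coe_mul, inv_mul_cancel_right, h]
  simpa using (joined_one_of_det_eq_one _ hAB).mul (Joined.refl B)

theorem exists_orthogonalGroup_det_eq_neg_one {κ : Type*} [Fintype κ] [DecidableEq κ]
    (i : κ) : ∃ A : orthogonalGroup κ ℝ, (A : Matrix κ κ ℝ).det = -1 := by
  set d : κ → ℝ := Function.update 1 i (-1)
  have hdd : d * d = 1 := by
    funext j
    rcases eq_or_ne j i with rfl | hj <;> simp [d, *]
  refine ⟨⟨diagonal d, ?_⟩, ?_⟩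
  · rw [mem_orthogonalGroup_iff', diagonal_transpose, diagonal_mul_diagonal, ← diagonal_one]
    exact congrArg diagonal hdd
  · simp [d, det_diagonal, Finset.prod_update_of_mem]

end Matrix

/-- Two orthogonal matrices are joined by a path in `O(n)` if and only if they have
the same determinant; the determinant takes only the values `1` and `-1` on `O(n)`;
and (for `n ≥ 1`) `O(n)` has exactly two path components. -/
theorem orthogonalGroup_joined_iff_det_eq (n : ℕ) (hn : 1 ≤ n) :
    (∀ A B : Matrix.orthogonalGroup (Fin n) ℝ,
      Joined A B ↔
        (A : Matrix (Fin n) (Fin n) ℝ).det = (B : Matrix (Fin n) (Fin n) ℝ).det) ∧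
    (∀ A : Matrix.orthogonalGroup (Fin n) ℝ,
      (A : Matrix (Fin n) (Fin n) ℝ).det = 1 ∨ (A : Matrix (Fin n) (Fin n) ℝ).det = -1) ∧
    (∃ A B : Matrix.orthogonalGroup (Fin n) ℝ, ¬ Joined A B) := by
  refine ⟨joined_iff_det_eq, fun A => det_eq_one_or_eq_neg_one_of_mem_orthogonalGroup A.2, ?_⟩
  obtain ⟨R, hR⟩ := exists_orthogonalGroup_det_eq_neg_one (⟨0, hn⟩ : Fin n)
  refine ⟨1, R, fun h => ?_⟩
  have := (joined_iff_det_eq 1 R).mp h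
  norm_num [hR] at this
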